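/- Let h > 0, P₁ > 0, P₂ ≥ 0, and let integers n₁ ≥ n₂ ≥ 1 be given; set p := n₂/n₁. Let X₁,…,X_{n₁}, Z̃₁,…,Z̃_{n₁} be 2n₁ mutually independent real random variables on a probability space (Ω, 𝒜, ℙ), with Xⱼ distributed as N(0,P₁) for all j, Z̃ⱼ distributed as N(0, 1+hP₂) for 1 ≤ j ≤ n₂, and Z̃ⱼ distributed as N(0,1) for n₂ < j ≤ n₁. Define S := Σ_{j=1}^{n₂} (log₂ e/(2(1+h(P₁+P₂))))·( h(Xⱼ² − (P₁/(1+hP₂))·Z̃ⱼ²) + 2√h·Xⱼ·Z̃ⱼ ) + Σ_{j=n₂+1}^{n₁} (log₂ e/(2(1+hP₁)))·( h(Xⱼ² − P₁·Z̃ⱼ²) + 2√h·Xⱼ·Z̃ⱼ ). Then (1/n₁)·Var[S] = (log₂ e)² · ( p·hP₁/(1 + h(P₁+P₂)) + (1−p)·hP₁/(1 + hP₁) ). -/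

import Mathlib

/-!
Each summand of `S` is a quadratic form `α X² + β Z² + γ X Z` in a pair of independent centred
Gaussians `X ~ N(0, a)`, `Z ~ N(0, b)`. Its three monomials are uncorrelated: `X²` and `Z²` are
independent, and each covariance with `X Z` keeps a lone factor `Z` or `X` of mean zero. With
`E X⁴ = 3 a²` the variance of the form is therefore `2 α² a² + 2 β² b² + γ² a b`, which for the
coefficients of the information density collapses to `(log₂ e)² h a / (b + h a)`. Independence
across channel uses adds these up: `n₂` terms with `b = 1 + h P₂` and `n₁ - n₂` with `b = 1`.
-/

open MeasureTheory ProbabilityTheory Real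
open scoped NNReal ENNReal

lemma MeasureTheory.MemLp.sq_of_four {Ω : Type*} [MeasurableSpace Ω] {μ : Measure Ω}
    {X : Ω → ℝ} (hX : MemLp X 4 μ) : MemLp (fun ω ↦ X ω ^ 2) 2 μ := by
  refine (memLp_two_iff_integrable_sq (f := fun ω ↦ X ω ^ 2) (hX.1.pow 2)).2 ?_
  refine (hX.integrable_norm_pow (by norm_num)).congr (ae_of_all _ fun ω ↦ ?_)
  simp only [Real.norm_eq_abs, ← pow_mul]
  exact Even.pow_abs ⟨2, rfl⟩ (X ω)

lemma Fin.sum_ite_val_lt {n m : ℕ} (hmn : m ≤ n) (a b : ℝ) :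
    ∑ j : Fin n, (if (j : ℕ) < m then a else b) = m * a + (n - m) * b := by
  have hlt : (Finset.univ.filter fun j : Fin n ↦ (j : ℕ) < m).card = m := by
    rw [Fin.card_filter_val_lt, min_eq_right hmn]
  have hge : (Finset.univ.filter fun j : Fin n ↦ ¬(j : ℕ) < m).card = n - m := by
    have := Finset.card_filter_add_card_filter_not (s := Finset.univ) fun j : Fin n ↦ (j : ℕ) < m
    rw [Finset.card_univ, Fintype.card_fin, hlt] at this
    omega
  rw [Finset.sum_ite, Finset.sum_const, Finset.sum_const, hlt, hge, nsmul_eq_mul, nsmul_eq_mul,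
    Nat.cast_sub hmn]

lemma deriv_mul_exp_mul_sq_div_two (v : ℝ) {p q : ℝ → ℝ}
    (hp : ∀ t, HasDerivAt p (q t - v * t * p t) t) :
    deriv (fun s ↦ p s * rexp (v * s ^ 2 / 2)) = fun t ↦ q t * rexp (v * t ^ 2 / 2) := by
  ext t
  have he : HasDerivAt (fun s ↦ v * s ^ 2 / 2) (v * t) t :=
    (((hasDerivAt_pow 2 t).const_mul v).div_const 2).congr_deriv (by norm_num; ring)
  exact ((hp t).mul he.exp).deriv.trans (by ring)

namespace ProbabilityTheory

lemma integral_sq_gaussianReal (v : ℝ≥0) : ∫ x, x ^ 2 ∂gaussianReal 0 v = v := by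
  simpa [variance_eq_integral measurable_id.aemeasurable] using
    variance_id_gaussianReal (μ := 0) (v := v)

lemma integral_pow_four_gaussianReal (v : ℝ≥0) :
    ∫ x, x ^ 4 ∂gaussianReal 0 v = 3 * (v : ℝ) ^ 2 := by
  -- the fourth derivative at `0` of the mgf `t ↦ exp (v t² / 2)`; every derivative has the
  -- shape `p t * exp (v t² / 2)` with `p` a polynomial
  have hmgf : mgf id (gaussianReal 0 v) = fun t ↦ 1 * rexp (v * t ^ 2 / 2) := by
    simp [mgf_id_gaussianReal]
  have h := iteratedDeriv_mgf_zero (X := id) (μ := gaussianReal 0 v) (by simp) 4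
  rw [hmgf,
    iteratedDeriv_succ', deriv_mul_exp_mul_sq_div_two _ (q := fun t ↦ v * t)
      fun t ↦ (hasDerivAt_const t 1).congr_deriv (by ring),
    iteratedDeriv_succ', deriv_mul_exp_mul_sq_div_two _ (p := fun t ↦ v * t)
      (q := fun t ↦ v + v ^ 2 * t ^ 2)
      fun t ↦ ((hasDerivAt_id t).const_mul (v : ℝ)).congr_deriv (by simp; ring),
    iteratedDeriv_succ', deriv_mul_exp_mul_sq_div_two _ (p := fun t ↦ v + v ^ 2 * t ^ 2)
      (q := fun t ↦ 3 * v ^ 2 * t + v ^ 3 * t ^ 3)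
      fun t ↦ (((hasDerivAt_pow 2 t).const_mul ((v : ℝ) ^ 2)).const_add (v : ℝ)).congr_deriv
        (by norm_num; ring),
    iteratedDeriv_succ', deriv_mul_exp_mul_sq_div_two _ (p := fun t ↦ 3 * v ^ 2 * t + v ^ 3 * t ^ 3)
      (q := fun t ↦ 3 * v ^ 2 + 6 * v ^ 3 * t ^ 2 + v ^ 4 * t ^ 4)
      fun t ↦ (((hasDerivAt_id t).const_mul (3 * (v : ℝ) ^ 2)).add
        ((hasDerivAt_pow 3 t).const_mul ((v : ℝ) ^ 3))).congr_deriv (by norm_num; ring)] at h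
  simpa using h.symm

variable {Ω : Type*} [MeasurableSpace Ω] {μ : Measure Ω}

lemma HasLaw.of_map_eq {𝓧 : Type*} [MeasurableSpace 𝓧] {Y : Ω → 𝓧} {ν : Measure 𝓧} [NeZero ν]
    (h : μ.map Y = ν) : HasLaw Y ν μ :=
  ⟨AEMeasurable.of_map_ne_zero (h ▸ NeZero.ne ν), h⟩

lemma iIndepFun.variance_sum_comp_sumElim {ι : Type*} [Fintype ι] {X Z : ι → Ω → ℝ}
    (h : iIndepFun (Sum.elim X Z) μ) (hX : ∀ i, AEMeasurable (X i) μ)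
    (hZ : ∀ i, AEMeasurable (Z i) μ) {φ : ι → ℝ → ℝ → ℝ}
    (hφ : ∀ i, Measurable (Function.uncurry (φ i)))
    (hφ₂ : ∀ i, MemLp (fun ω ↦ φ i (X i ω) (Z i ω)) 2 μ) :
    Var[fun ω ↦ ∑ i, φ i (X i ω) (Z i ω); μ] = ∑ i, Var[fun ω ↦ φ i (X i ω) (Z i ω); μ] := by
  have hpair : Set.Pairwise (Finset.univ : Finset ι)
      fun i j ↦ (fun ω ↦ φ i (X i ω) (Z i ω)) ⟂ᵢ[μ] (fun ω ↦ φ j (X j ω) (Z j ω)) :=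
    fun i _ j _ hij ↦ (h.indepFun_prodMk_prodMk₀ (fun k ↦ k.rec hX hZ) (.inl i) (.inr i)
      (.inl j) (.inr j) (by simpa using hij) (by simp) (by simp) (by simpa using hij)).comp
      (hφ i) (hφ j)
  simpa [Finset.sum_fn] using IndepFun.variance_sum (fun i _ ↦ hφ₂ i) hpair

variable {X Z : Ω → ℝ}

lemma IndepFun.covariance_sq_mul_eq_zero (hXZ : X ⟂ᵢ[μ] Z) (hX : AEMeasurable X μ)
    (hZ : AEMeasurable Z μ) (hZ0 : μ[Z] = 0) :
    cov[fun ω ↦ X ω ^ 2, fun ω ↦ X ω * Z ω; μ] = 0 := by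
  have hXZ0 : μ[fun ω ↦ X ω * Z ω] = 0 := by
    rw [hXZ.integral_fun_mul_eq_mul_integral hX.aestronglyMeasurable hZ.aestronglyMeasurable,
      hZ0, mul_zero]
  set c := μ[fun ω ↦ X ω ^ 2]
  calc cov[fun ω ↦ X ω ^ 2, fun ω ↦ X ω * Z ω; μ]
      = ∫ ω, X ω * (X ω ^ 2 - c) * Z ω ∂μ := by
        rw [covariance, hXZ0]; congr with ω; ring
    _ = μ[fun ω ↦ X ω * (X ω ^ 2 - c)] * μ[Z] :=
        IndepFun.integral_fun_mul_eq_mul_integral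
          (hXZ.comp (φ := fun x ↦ x * (x ^ 2 - c)) (by fun_prop) measurable_id) (by fun_prop)
          hZ.aestronglyMeasurable
    _ = 0 := by rw [hZ0, mul_zero]

lemma IndepFun.variance_mul (hXZ : X ⟂ᵢ[μ] Z) (hX : AEMeasurable X μ) (hZ : AEMeasurable Z μ)
    (hX0 : μ[X] = 0) :
    Var[fun ω ↦ X ω * Z ω; μ] = μ[fun ω ↦ X ω ^ 2] * μ[fun ω ↦ Z ω ^ 2] := by
  rw [variance_of_integral_eq_zero (by fun_prop) (by
    rw [hXZ.integral_fun_mul_eq_mul_integral hX.aestronglyMeasurable hZ.aestronglyMeasurable,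
      hX0, zero_mul])]
  simp_rw [mul_pow]
  exact IndepFun.integral_fun_mul_eq_mul_integral
    (hXZ.comp (measurable_id.pow_const 2) (measurable_id.pow_const 2)) (by fun_prop) (by fun_prop)

lemma IndepFun.variance_quadratic [IsFiniteMeasure μ] (hXZ : X ⟂ᵢ[μ] Z) (hX : MemLp X 4 μ)
    (hZ : MemLp Z 4 μ) (hX0 : μ[X] = 0) (hZ0 : μ[Z] = 0) (α β γ : ℝ) :
    Var[fun ω ↦ α * X ω ^ 2 + β * Z ω ^ 2 + γ * (X ω * Z ω); μ] =
      α ^ 2 * Var[fun ω ↦ X ω ^ 2; μ] + β ^ 2 * Var[fun ω ↦ Z ω ^ 2; μ] +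
        γ ^ 2 * (μ[fun ω ↦ X ω ^ 2] * μ[fun ω ↦ Z ω ^ 2]) := by
  have hXm := hX.aemeasurable
  have hZm := hZ.aemeasurable
  have hX2 := hX.sq_of_four
  have hZ2 := hZ.sq_of_four
  have hXZ2 : MemLp (fun ω ↦ X ω * Z ω) 2 μ := by
    refine (memLp_two_iff_integrable_sq (by fun_prop)).2 ?_
    simp_rw [mul_pow]
    exact (hXZ.comp (measurable_id.pow_const 2) (measurable_id.pow_const 2)).integrable_mul
      (hX2.integrable one_le_two) (hZ2.integrable one_le_two)
  have hA := hX2.const_mul α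
  have hB := hZ2.const_mul β
  have hC := hXZ2.const_mul γ
  have hAB : (fun ω ↦ α * X ω ^ 2) ⟂ᵢ[μ] (fun ω ↦ β * Z ω ^ 2) :=
    hXZ.comp (φ := fun x ↦ α * x ^ 2) (ψ := fun z ↦ β * z ^ 2) (by fun_prop) (by fun_prop)
  have hBC : cov[fun ω ↦ Z ω ^ 2, fun ω ↦ X ω * Z ω; μ] = 0 := by
    simp_rw [mul_comm (X _)]
    exact hXZ.symm.covariance_sq_mul_eq_zero hZm hXm hX0
  rw [show (fun ω ↦ α * X ω ^ 2 + β * Z ω ^ 2 + γ * (X ω * Z ω)) =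
      (fun ω ↦ α * X ω ^ 2) + (fun ω ↦ β * Z ω ^ 2) + (fun ω ↦ γ * (X ω * Z ω)) from rfl,
    ProbabilityTheory.variance_add (hA.add hB) hC, hAB.variance_add hA hB,
    covariance_add_left hA hB hC, covariance_const_mul_left, covariance_const_mul_right,
    covariance_const_mul_left, covariance_const_mul_right,
    hXZ.covariance_sq_mul_eq_zero hXm hZm hZ0, hBC, variance_const_mul, variance_const_mul,
    variance_const_mul, hXZ.variance_mul hXm hZm hX0]
  ring

variable {a b v : ℝ≥0}

lemma HasLaw.memLp_of_gaussianReal {m : ℝ} (hX : HasLaw X (gaussianReal m v) μ) {p : ℝ≥0∞}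
    (hp : p ≠ ∞) : MemLp X p μ := by
  have h := memLp_id_gaussianReal' (μ := m) (v := v) p hp
  rwa [← hX.map_eq, memLp_map_measure_iff aestronglyMeasurable_id hX.aemeasurable] at h

lemma HasLaw.integral_sq_of_gaussianReal (hX : HasLaw X (gaussianReal 0 v) μ) :
    μ[fun ω ↦ X ω ^ 2] = (v : ℝ) :=
  (hX.integral_comp (f := fun x ↦ x ^ 2) (by fun_prop)).trans (integral_sq_gaussianReal v)

lemma HasLaw.variance_sq_of_gaussianReal (hX : HasLaw X (gaussianReal 0 v) μ) :
    Var[fun ω ↦ X ω ^ 2; μ] = 2 * (v : ℝ) ^ 2 := by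
  have := hX.isProbabilityMeasure
  have h4 : μ[fun ω ↦ X ω ^ 4] = 3 * (v : ℝ) ^ 2 :=
    (hX.integral_comp (f := fun x ↦ x ^ 4) (by fun_prop)).trans (integral_pow_four_gaussianReal v)
  rw [variance_eq_sub (hX.memLp_of_gaussianReal (by simp)).sq_of_four,
    hX.integral_sq_of_gaussianReal]
  simp only [Pi.pow_apply, ← pow_mul]
  rw [h4]
  ring

lemma IndepFun.variance_quadratic_of_gaussianReal (hXZ : X ⟂ᵢ[μ] Z)
    (hX : HasLaw X (gaussianReal 0 a) μ) (hZ : HasLaw Z (gaussianReal 0 b) μ) (α β γ : ℝ) :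
    Var[fun ω ↦ α * X ω ^ 2 + β * Z ω ^ 2 + γ * (X ω * Z ω); μ] =
      2 * α ^ 2 * a ^ 2 + 2 * β ^ 2 * b ^ 2 + γ ^ 2 * (a * b) := by
  have := hX.isProbabilityMeasure
  rw [hXZ.variance_quadratic (hX.memLp_of_gaussianReal (by simp))
      (hZ.memLp_of_gaussianReal (by simp)) (by simp [hX.integral_eq]) (by simp [hZ.integral_eq]),
    hX.variance_sq_of_gaussianReal, hZ.variance_sq_of_gaussianReal,
    hX.integral_sq_of_gaussianReal, hZ.integral_sq_of_gaussianReal]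
  ring

/-- The information density `i(x; y) - E[i]` in bits of the channel `y = √h x + z` with
`x ~ N(0, P)` and `z ~ N(0, N)`, written in terms of `x` and `z`. -/
noncomputable def centralizedInfoDensity (h P N x z : ℝ) : ℝ :=
  logb 2 (exp 1) / (2 * (N + h * P)) * (h * (x ^ 2 - P / N * z ^ 2) + 2 * √h * x * z)

lemma IndepFun.variance_centralizedInfoDensity (hXZ : X ⟂ᵢ[μ] Z) {h P N : ℝ} (hh : 0 ≤ h)
    (hP : 0 ≤ P) (hN : 0 < N) (hX : HasLaw X (gaussianReal 0 P.toNNReal) μ)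
    (hZ : HasLaw Z (gaussianReal 0 N.toNNReal) μ) :
    Var[fun ω ↦ centralizedInfoDensity h P N (X ω) (Z ω); μ] =
      logb 2 (exp 1) ^ 2 * (h * P / (N + h * P)) := by
  set c := logb 2 (exp 1) / (2 * (N + h * P)) with hc
  have hform : (fun ω ↦ centralizedInfoDensity h P N (X ω) (Z ω)) = fun ω ↦
      c * h * X ω ^ 2 + -(c * h * (P / N)) * Z ω ^ 2 + 2 * c * √h * (X ω * Z ω) := by
    ext ω; simp only [centralizedInfoDensity, c]; ring
  have hNP : 0 < N + h * P := by positivity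
  rw [hform, hXZ.variance_quadratic_of_gaussianReal hX hZ, Real.coe_toNNReal _ hP,
    Real.coe_toNNReal _ hN.le, mul_pow, mul_pow, sq_sqrt hh, hc]
  field_simp
  ring

lemma iIndepFun.variance_sum_centralizedInfoDensity [IsFiniteMeasure μ] {ι : Type*} [Fintype ι]
    {X Z : ι → Ω → ℝ} (hXZ : iIndepFun (Sum.elim X Z) μ) {h P : ℝ} {N : ι → ℝ} (hh : 0 < h)
    (hP : 0 < P) (hN : ∀ i, 0 < N i) (hX : ∀ i, HasLaw (X i) (gaussianReal 0 P.toNNReal) μ)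
    (hZ : ∀ i, HasLaw (Z i) (gaussianReal 0 (N i).toNNReal) μ) :
    Var[fun ω ↦ ∑ i, centralizedInfoDensity h P (N i) (X i ω) (Z i ω); μ] =
      logb 2 (exp 1) ^ 2 * ∑ i, h * P / (N i + h * P) := by
  have hVar (i : ι) : Var[fun ω ↦ centralizedInfoDensity h P (N i) (X i ω) (Z i ω); μ] =
      logb 2 (exp 1) ^ 2 * (h * P / (N i + h * P)) :=
    IndepFun.variance_centralizedInfoDensity (hXZ.indepFun (i := .inl i) (j := .inr i) (by simp))
      hh.le hP.le (hN i) (hX i) (hZ i)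
  have hL : 0 < logb 2 (exp 1) := logb_pos one_lt_two (one_lt_exp_iff.2 one_pos)
  have hX' (i : ι) := (hX i).aemeasurable
  have hZ' (i : ι) := (hZ i).aemeasurable
  rw [Finset.mul_sum, ← Finset.sum_congr rfl fun i _ ↦ hVar i]
  -- a variance other than the junk value `0` certifies square integrability
  refine hXZ.variance_sum_comp_sumElim hX' hZ' (fun i ↦ by unfold centralizedInfoDensity; fun_prop)
    fun i ↦ memLp_two_of_variance_ne_zero ?_ (by rw [hVar]; have := hN i; positivity)
  have := hX' i
  have := hZ' i
  unfold centralizedInfoDensity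
  fun_prop

end ProbabilityTheory

open ProbabilityTheory in
theorem dispersion_weaker_user_general
    {Ω : Type*} [MeasureSpace Ω] [IsProbabilityMeasure (ℙ : Measure Ω)]
    (h P₁ P₂ : ℝ) (hh : 0 < h) (hP₁ : 0 < P₁) (hP₂ : 0 ≤ P₂)
    (n₁ n₂ : ℕ) (hn₂ : 1 ≤ n₂) (hn : n₂ ≤ n₁)
    (X Z : Fin n₁ → Ω → ℝ)
    (hindep : iIndepFun (Sum.elim X Z) ℙ)
    (hXlaw : ∀ j, Measure.map (X j) ℙ = gaussianReal 0 P₁.toNNReal)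
    (hZlaw₁ : ∀ j : Fin n₁, (j : ℕ) < n₂ →
      Measure.map (Z j) ℙ = gaussianReal 0 (1 + h * P₂).toNNReal)
    (hZlaw₂ : ∀ j : Fin n₁, n₂ ≤ (j : ℕ) →
      Measure.map (Z j) ℙ = gaussianReal 0 1) :
    (1 / (n₁ : ℝ)) * variance (fun ω =>
        (∑ j ∈ Finset.univ.filter (fun j : Fin n₁ => (j : ℕ) < n₂),
          (Real.logb 2 (Real.exp 1) / (2 * (1 + h * (P₁ + P₂)))) *
            (h * (X j ω ^ 2 - P₁ / (1 + h * P₂) * Z j ω ^ 2) +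
              2 * Real.sqrt h * X j ω * Z j ω)) +
        ∑ j ∈ Finset.univ.filter (fun j : Fin n₁ => n₂ ≤ (j : ℕ)),
          (Real.logb 2 (Real.exp 1) / (2 * (1 + h * P₁))) *
            (h * (X j ω ^ 2 - P₁ * Z j ω ^ 2) +
              2 * Real.sqrt h * X j ω * Z j ω)) ℙ =
      Real.logb 2 (Real.exp 1) ^ 2 *
        (((n₂ : ℝ) / n₁) * (h * P₁ / (1 + h * (P₁ + P₂))) +
          (1 - (n₂ : ℝ) / n₁) * (h * P₁ / (1 + h * P₁))) := by
  let N : Fin n₁ → ℝ := fun j ↦ if (j : ℕ) < n₂ then 1 + h * P₂ else 1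
  have hN (j : Fin n₁) : 0 < N j := by dsimp only [N]; split_ifs <;> positivity
  have hZ (j : Fin n₁) : HasLaw (Z j) (gaussianReal 0 (N j).toNNReal) ℙ := .of_map_eq <| by
    dsimp only [N]
    split_ifs with hj
    · exact hZlaw₁ j hj
    · simpa using hZlaw₂ j (not_lt.mp hj)
  convert_to (1 / (n₁ : ℝ)) *
    Var[fun ω ↦ ∑ j, centralizedInfoDensity h P₁ (N j) (X j ω) (Z j ω); ℙ] = _ using 3
  · ext ω
    rw [← Finset.sum_filter_add_sum_filter_not _ (fun j : Fin n₁ ↦ (j : ℕ) < n₂)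
      fun j ↦ centralizedInfoDensity h P₁ (N j) (X j ω) (Z j ω)]
    congr 1
    · refine Finset.sum_congr rfl fun j hj ↦ ?_
      simp only [centralizedInfoDensity, N, if_pos (Finset.mem_filter.mp hj).2]
      ring
    · refine Finset.sum_congr (by ext; simp) fun j hj ↦ ?_
      simp [centralizedInfoDensity, N, (Finset.mem_filter.mp hj).2]
  have hsummand (j : Fin n₁) : h * P₁ / (N j + h * P₁) = if (j : ℕ) < n₂
      then h * P₁ / (1 + h * (P₁ + P₂)) else h * P₁ / (1 + h * P₁) := by
    dsimp only [N]; split_ifs <;> ring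
  rw [hindep.variance_sum_centralizedInfoDensity hh hP₁ hN (fun j ↦ .of_map_eq (hXlaw j)) hZ,
    Finset.sum_congr rfl fun j _ ↦ hsummand j, Fin.sum_ite_val_lt hn]
  have : (n₁ : ℝ) ≠ 0 := by norm_cast; omega
  field_simp

/-- Dispersion of the weaker user (equations (14) and (97)): the normalized
variance of the centralized information density over the heterogeneous block
equals `(log₂e)² (p·hP₁/(1+h(P₁+P₂)) + (1-p)·hP₁/(1+hP₁))` with `p = n₂/n₁`. -/
theorem dispersion_weaker_user
    {Ω : Type*} [MeasureSpace Ω] [IsProbabilityMeasure (ℙ : Measure Ω)]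
    (h P₁ P₂ : ℝ) (hh : 0 < h) (hP₁ : 0 < P₁) (hP₂ : 0 ≤ P₂)
    (n₁ n₂ : ℕ) (hn₂ : 1 ≤ n₂) (hn : n₂ ≤ n₁)
    (X Z : Fin n₁ → Ω → ℝ)
    (hXmeas : ∀ j, Measurable (X j)) (hZmeas : ∀ j, Measurable (Z j))
    (hindep : iIndepFun (Sum.elim X Z) ℙ)
    (hXlaw : ∀ j, Measure.map (X j) ℙ = gaussianReal 0 P₁.toNNReal)
    (hZlaw₁ : ∀ j : Fin n₁, (j : ℕ) < n₂ →
      Measure.map (Z j) ℙ = gaussianReal 0 (1 + h * P₂).toNNReal)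
    (hZlaw₂ : ∀ j : Fin n₁, n₂ ≤ (j : ℕ) →
      Measure.map (Z j) ℙ = gaussianReal 0 1) :
    (1 / (n₁ : ℝ)) * variance (fun ω =>
        (∑ j ∈ Finset.univ.filter (fun j : Fin n₁ => (j : ℕ) < n₂),
          (Real.logb 2 (Real.exp 1) / (2 * (1 + h * (P₁ + P₂)))) *
            (h * (X j ω ^ 2 - P₁ / (1 + h * P₂) * Z j ω ^ 2) +
              2 * Real.sqrt h * X j ω * Z j ω)) +
        ∑ j ∈ Finset.univ.filter (fun j : Fin n₁ => n₂ ≤ (j : ℕ)),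
          (Real.logb 2 (Real.exp 1) / (2 * (1 + h * P₁))) *
            (h * (X j ω ^ 2 - P₁ * Z j ω ^ 2) +
              2 * Real.sqrt h * X j ω * Z j ω)) ℙ =
      Real.logb 2 (Real.exp 1) ^ 2 *
        (((n₂ : ℝ) / n₁) * (h * P₁ / (1 + h * (P₁ + P₂))) +
          (1 - (n₂ : ℝ) / n₁) * (h * P₁ / (1 + h * P₁))) :=
  dispersion_weaker_user_general h P₁ P₂ hh hP₁ hP₂ n₁ n₂ hn₂ hn X Z hindep hXlaw hZlaw₁ hZlaw₂
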